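/- Let A be a unital C*-algebra, a ∈ A self-adjoint with ‖a - a₀‖ < ε/3 where a₀ = Σᵢ λᵢ pᵢ for mutually orthogonal projections p₁,…,pₘ and positive reals λᵢ. If e is a projection with ‖e pⱼ e‖ ≥ 1 - ε₀ for all j, where ε₀ ≤ ε/(3‖a₀‖), then ‖e a e‖ ≥ ‖a‖ - ε. -/
import Mathlib


/-- If `a` is self-adjoint with `‖a - a₀‖ < ε/3` where `a₀ = Σᵢ λᵢ pᵢ` for
mutually orthogonal projections and positive reals `λᵢ`, and `e` is a projection with
`‖e pⱼ e‖ ≥ 1 - ε₀` for all `j`, where `ε₀ ≤ ε/(3‖a₀‖)`, then `‖e a e‖ ≥ ‖a‖ - ε`. -/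
theorem stmt1 {A : Type*} [NormedRing A] [StarRing A] [CStarRing A] [CompleteSpace A]
    [NormedAlgebra ℂ A] [StarModule ℂ A]
    (m : ℕ) (hm : 0 < m) (p : Fin m → A) (lam : Fin m → ℝ)
    (hproj : ∀ j, IsSelfAdjoint (p j) ∧ p j * p j = p j)
    (horth : ∀ i j, i ≠ j → p i * p j = 0)
    (hlam : ∀ j, 0 < lam j)
    (a₀ : A) (ha₀ : a₀ = ∑ j, ((lam j : ℂ) • p j)) (ha₀ne : a₀ ≠ 0)
    (a : A) (ha : IsSelfAdjoint a)
    (ε ε₀ : ℝ) (hε : 0 < ε) (hε₀pos : 0 < ε₀)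
    (hε₀ : ε₀ ≤ ε / (3 * ‖a₀‖))
    (haa₀ : ‖a - a₀‖ < ε / 3)
    (e : A) (he_sa : IsSelfAdjoint e) (he_idem : e * e = e)
    (hepe : ∀ j, 1 - ε₀ ≤ ‖e * p j * e‖) :
    ‖a‖ - ε ≤ ‖e * a * e‖ := by
  letI : CStarAlgebra A := ⟨⟩
  letI := CStarAlgebra.spectralOrder A
  haveI := CStarAlgebra.spectralOrderedRing A
  have ha₀pos : (0:ℝ) < ‖a₀‖ := norm_pos_iff.mpr ha₀ne
  -- ε₀ * ‖a₀‖ ≤ ε/3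
  have hkey : ‖a₀‖ * ε₀ ≤ ε / 3 := by
    rw [le_div_iff₀ (by positivity)] at hε₀
    nlinarith
  -- ‖a‖ ≤ ‖a₀‖ + ε/3
  have hna : ‖a‖ ≤ ‖a₀‖ + ε / 3 := by
    calc ‖a‖ = ‖(a - a₀) + a₀‖ := by rw [sub_add_cancel]
    _ ≤ ‖a - a₀‖ + ‖a₀‖ := norm_add_le _ _
    _ ≤ ‖a₀‖ + ε / 3 := by linarith
  rcases le_or_gt 1 ε₀ with hε₀1 | hε₀1
  · -- degenerate case: ε ≥ 3‖a₀‖, hence ‖a‖ - ε ≤ 0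
    have : 3 * ‖a₀‖ ≤ ε := by nlinarith
    have : ‖a‖ - ε ≤ 0 := by linarith
    exact this.trans (norm_nonneg _)
  -- main case
  have hppos : ∀ j, 0 ≤ p j := fun j => by
    have := star_mul_self_nonneg (p j)
    rwa [(hproj j).1.star_eq, (hproj j).2] at this
  -- nonnegative real scalar multiples of nonnegatives are nonnegative
  have hsmul : ∀ (r : ℝ), 0 ≤ r → ∀ x : A, 0 ≤ x → 0 ≤ (r : ℂ) • x := by
    intro r hr x hx
    have h := star_left_conjugate_nonneg hx ((Real.sqrt r : ℂ) • (1 : A))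
    have hstar : star ((Real.sqrt r : ℂ) • (1 : A)) = (Real.sqrt r : ℂ) • (1 : A) := by
      simp [star_smul, Complex.conj_ofReal]
    rw [hstar] at h
    have : ((Real.sqrt r : ℂ) • (1 : A)) * x * ((Real.sqrt r : ℂ) • (1 : A))
        = (r : ℂ) • x := by
      rw [smul_mul_assoc, mul_smul_comm, one_mul, mul_one, smul_smul,
        ← Complex.ofReal_mul, Real.mul_self_sqrt hr]
    rwa [this] at h
  -- each e * ((lam j) • p j) * e is nonneg
  have heterm : ∀ j, 0 ≤ e * ((lam j : ℂ) • p j) * e := by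
    intro j
    have h := star_left_conjugate_nonneg (hsmul (lam j) (hlam j).le (p j) (hppos j)) e
    rwa [he_sa.star_eq] at h
  -- pick the maximal lam
  haveI : Nonempty (Fin m) := ⟨⟨0, hm⟩⟩
  obtain ⟨j₀, hj₀⟩ := Finite.exists_max lam
  set L := lam j₀ with hL
  -- p j₀ ≠ 0 since ε₀ < 1
  have hpj₀ne : p j₀ ≠ 0 := by
    intro h0
    have := hepe j₀
    rw [h0, mul_zero, zero_mul, norm_zero] at this
    linarith
  have hpj₀norm : ‖p j₀‖ = 1 := by
    have h := CStarRing.norm_star_mul_self (x := p j₀)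
    rw [(hproj j₀).1.star_eq, (hproj j₀).2] at h
    have hne : ‖p j₀‖ ≠ 0 := norm_ne_zero_iff.mpr hpj₀ne
    field_simp at h
    nlinarith [norm_nonneg (p j₀)]
  -- L ≤ ‖a₀‖ : since (L:ℂ) • p j₀ ≤ a₀
  have hLlea₀ : L ≤ ‖a₀‖ := by
    have hle : (L : ℂ) • p j₀ ≤ a₀ := by
      rw [ha₀]
      exact Finset.single_le_sum
        (fun j _ => hsmul (lam j) (hlam j).le (p j) (hppos j)) (Finset.mem_univ j₀)
    have := CStarAlgebra.norm_le_norm_of_nonneg_of_le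
      (hsmul L (hlam j₀).le (p j₀) (hppos j₀)) hle
    rwa [norm_smul, Complex.norm_real, Real.norm_eq_abs,
      abs_of_nonneg (hlam j₀).le, hpj₀norm, mul_one] at this
  -- ‖a₀‖ ≤ L : a₀ ≤ L • 1
  have hq : (∑ j, p j) * (∑ j, p j) = ∑ j, p j := by
    rw [Finset.sum_mul_sum]
    refine Finset.sum_congr rfl fun i _ => ?_
    rw [Finset.sum_eq_single i (fun j _ hji => horth i j (Ne.symm hji)) (by simp), (hproj i).2]
  have hqsa : IsSelfAdjoint (∑ j, p j) := by
    refine isSelfAdjoint_iff.mpr ?_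
    rw [star_sum]
    exact Finset.sum_congr rfl fun j _ => (hproj j).1.star_eq
  have h1q : 0 ≤ (1 : A) - ∑ j, p j := by
    have hidem : ((1:A) - ∑ j, p j) * ((1:A) - ∑ j, p j) = (1:A) - ∑ j, p j := by
      simp only [sub_mul, mul_sub, one_mul, mul_one, hq]; abel
    have hsa : star ((1:A) - ∑ j, p j) = (1:A) - ∑ j, p j := by
      rw [star_sub, star_one, hqsa.star_eq]
    have := star_mul_self_nonneg ((1:A) - ∑ j, p j)
    rwa [hsa, hidem] at this
  have ha₀leL : ‖a₀‖ ≤ L := by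
    have hle : a₀ ≤ (L : ℂ) • (1 : A) := by
      rw [← sub_nonneg]
      have hsum2 : ∑ j, ((L - lam j : ℝ) : ℂ) • p j
          = (∑ j, (L : ℂ) • p j) - ∑ j, (lam j : ℂ) • p j := by
        rw [← Finset.sum_sub_distrib]
        refine Finset.sum_congr rfl fun j _ => ?_
        rw [← sub_smul]
        norm_cast
      have hdecomp : (L : ℂ) • (1 : A) - a₀
          = (L : ℂ) • ((1:A) - ∑ j, p j) + ∑ j, ((L - lam j : ℝ) : ℂ) • p j := by
        rw [ha₀, smul_sub, Finset.smul_sum, hsum2]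
        abel
      rw [hdecomp]
      refine add_nonneg (hsmul L (hlam j₀).le _ h1q)
        (Finset.sum_nonneg fun j _ => hsmul _ (by have := hj₀ j; linarith) _ (hppos j))
    have ha₀nonneg : 0 ≤ a₀ := by
      rw [ha₀]
      exact Finset.sum_nonneg fun j _ => hsmul _ (hlam j).le _ (hppos j)
    have := CStarAlgebra.norm_le_norm_of_nonneg_of_le ha₀nonneg hle
    calc ‖a₀‖ ≤ ‖(L : ℂ) • (1 : A)‖ := this
    _ ≤ ‖(L : ℂ)‖ * ‖(1:A)‖ := norm_smul_le _ _
    _ = L := by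
        haveI : Nontrivial A := ⟨⟨a₀, 0, ha₀ne⟩⟩
        rw [Complex.norm_real, Real.norm_eq_abs, abs_of_nonneg (hlam j₀).le,
          CStarRing.norm_one, mul_one]
  -- ‖e * a₀ * e‖ ≥ L * (1 - ε₀)
  have hea₀e : L * (1 - ε₀) ≤ ‖e * a₀ * e‖ := by
    have hsum : e * a₀ * e = ∑ j, e * ((lam j : ℂ) • p j) * e := by
      rw [ha₀, Finset.mul_sum, Finset.sum_mul]
    have hle : e * ((L : ℂ) • p j₀) * e ≤ e * a₀ * e := by
      rw [hsum]
      exact Finset.single_le_sum (fun j _ => heterm j) (Finset.mem_univ j₀)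
    have h := CStarAlgebra.norm_le_norm_of_nonneg_of_le (heterm j₀) hle
    have heq : e * ((L : ℂ) • p j₀) * e = (L : ℂ) • (e * p j₀ * e) := by
      rw [mul_smul_comm, smul_mul_assoc]
    rw [heq, norm_smul, Complex.norm_real, Real.norm_eq_abs,
      abs_of_nonneg (hlam j₀).le] at h
    calc L * (1 - ε₀) ≤ L * ‖e * p j₀ * e‖ :=
          mul_le_mul_of_nonneg_left (hepe j₀) (hlam j₀).le
    _ ≤ ‖e * a₀ * e‖ := h
  -- ‖e‖ ≤ 1
  have hnorme : ‖e‖ ≤ 1 := by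
    have h := CStarRing.norm_star_mul_self (x := e)
    rw [he_sa.star_eq, he_idem] at h
    nlinarith [norm_nonneg e]
  -- ‖e * (a - a₀) * e‖ < ε/3
  have hediff : ‖e * (a - a₀) * e‖ < ε / 3 := by
    have h1 : ‖e * (a - a₀) * e‖ ≤ ‖e‖ * ‖a - a₀‖ * ‖e‖ :=
      calc ‖e * (a - a₀) * e‖ ≤ ‖e * (a - a₀)‖ * ‖e‖ := norm_mul_le _ _
      _ ≤ ‖e‖ * ‖a - a₀‖ * ‖e‖ := by gcongr; exact norm_mul_le _ _
    have h2 : ‖e‖ * ‖a - a₀‖ * ‖e‖ ≤ ‖a - a₀‖ := by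
      nlinarith [norm_nonneg e, norm_nonneg (a - a₀), hnorme,
        mul_nonneg (norm_nonneg e) (norm_nonneg (a - a₀))]
    linarith
  -- combine
  have hdecomp2 : e * a * e = e * a₀ * e + e * (a - a₀) * e := by
    have : e * (a - a₀) * e = e * a * e - e * a₀ * e := by rw [mul_sub, sub_mul]
    rw [this]
    abel
  have hfinal : ‖e * a₀ * e‖ - ‖e * (a - a₀) * e‖ ≤ ‖e * a * e‖ := by
    have := norm_add_le (e * a * e) (-(e * (a - a₀) * e))
    rw [hdecomp2] at this ⊢
    simp only [norm_neg] at this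
    have h2 : e * a₀ * e + e * (a - a₀) * e + -(e * (a - a₀) * e) = e * a₀ * e := by abel
    rw [h2] at this
    linarith
  have hLε₀ : L * ε₀ ≤ ε / 3 := by nlinarith
  calc ‖a‖ - ε ≤ (‖a₀‖ + ε / 3) - ε := by linarith
  _ ≤ L + ε / 3 - ε := by linarith
  _ ≤ L * (1 - ε₀) - ε / 3 := by nlinarith
  _ ≤ ‖e * a₀ * e‖ - ‖e * (a - a₀) * e‖ := by linarith
  _ ≤ ‖e * a * e‖ := hfinal
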